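/- Let $Q$ be an involutory quandle, $a,b,c \in Q$ with $c \rhd a = c \rhd b$. Then for all $i, j \geq 0$: $a^{(ca)^i (ab)^j abc} = a^{(ca)^{i+1} (ba)^j b}$ (relation $\beta_{i,j}$). -/

import Mathlib

/-- An involutory quandle: `x ▷ x = x`, `(x ▷ y) ▷ y = x`, and right self-distributivity. -/
structure InvQuandle (Q : Type*) where
  act : Q → Q → Q
  idem : ∀ x, act x x = x
  invol : ∀ x y, act (act x y) y = x
  distrib : ∀ x y z, act (act x y) z = act (act x z) (act y z)

namespace InvQuandle

variable {Q : Type*}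

/-- Apply a word (list of quandle elements) to `z` on the right:
`apw R z [y₁,…,y_k] = ((z ▷ y₁) ▷ y₂) ⋯ ▷ y_k`. -/
def apw (R : InvQuandle Q) (z : Q) (w : List Q) : Q := w.foldl R.act z

/-- The word `w` repeated `n` times. -/
def wpow (w : List Q) : ℕ → List Q
  | 0 => []
  | n + 1 => w ++ wpow w n

end InvQuandle

open InvQuandle

/-!
For every `x`, distributivity gives `x^{ca} = x^{a (c ▷ a)}`, and `(c ▷ a) ▷ b = (c ▷ b) ▷ b = c`,
so `x^{cab} = x^{abc}`. Hence `x^{abca} = x^{caba}`, and induction on `j` turns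
`x^{(ab)^j abc}` into `x^{ca (ba)^j b}`. Taking `x = a^{(ca)^i}` gives `β_{i,j}`.
-/

namespace InvQuandle

variable {Q : Type*}

@[simp]
lemma apw_nil (R : InvQuandle Q) (z : Q) : R.apw z [] = z := rfl

@[simp]
lemma apw_cons (R : InvQuandle Q) (z y : Q) (w : List Q) :
    R.apw z (y :: w) = R.apw (R.act z y) w := rfl

lemma apw_append (R : InvQuandle Q) (z : Q) (u v : List Q) :
    R.apw z (u ++ v) = R.apw (R.apw z u) v :=
  List.foldl_append

lemma wpow_succ (w : List Q) (n : ℕ) : wpow w (n + 1) = wpow w n ++ w := by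
  induction n with
  | zero => simp [wpow]
  | succ n ih =>
    show w ++ wpow w (n + 1) = (w ++ wpow w n) ++ w
    rw [ih, List.append_assoc]

lemma apw_cab_eq_apw_abc (R : InvQuandle Q) {a b c : Q} (h : R.act c a = R.act c b) (x : Q) :
    R.apw x [c, a, b] = R.apw x [a, b, c] := by
  have hc : R.act (R.act c a) b = c := by rw [h, R.invol]
  simp only [apw_cons, apw_nil]
  rw [R.distrib x c a, R.distrib, hc]

lemma apw_wpow_ab_abc (R : InvQuandle Q) {a b c : Q} (h : R.act c a = R.act c b) (j : ℕ)
    (x : Q) : R.apw x (wpow [a, b] j ++ [a, b, c]) = R.apw x ([c, a] ++ wpow [b, a] j ++ [b]) := by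
  induction j generalizing x with
  | zero => exact (apw_cab_eq_apw_abc R h x).symm
  | succ j ih =>
    have habca : R.apw x [a, b, c, a] = R.apw x [c, a, b, a] := by
      show R.apw x ([a, b, c] ++ [a]) = R.apw x ([c, a, b] ++ [a])
      rw [apw_append, apw_append, apw_cab_eq_apw_abc R h]
    calc R.apw x (wpow [a, b] (j + 1) ++ [a, b, c])
        = R.apw (R.apw x [a, b]) (wpow [a, b] j ++ [a, b, c]) := by
          rw [wpow, List.append_assoc, apw_append]
      _ = R.apw (R.apw x [a, b, c, a]) (wpow [b, a] j ++ [b]) := by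
          rw [ih, List.append_assoc, apw_append, ← apw_append]; rfl
      _ = R.apw x ([c, a] ++ wpow [b, a] (j + 1) ++ [b]) := by
          rw [habca, wpow, apw_append, apw_append]; rfl

end InvQuandle

/-- relation $β_{i,j}$: if $c ▷ a = c ▷ b$ then
$a^{(ca)^i (ab)^j abc} = a^{(ca)^{i+1} (ba)^j b}$. -/
theorem stmt13 {Q : Type*} (R : InvQuandle Q) (a b c : Q)
    (h : R.act c a = R.act c b) (i j : ℕ) :
    R.apw a (wpow [c, a] i ++ wpow [a, b] j ++ [a, b, c]) =
    R.apw a (wpow [c, a] (i + 1) ++ wpow [b, a] j ++ [b]) := by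
  rw [wpow_succ, List.append_assoc, apw_append, apw_wpow_ab_abc R h, ← apw_append]
  simp only [List.append_assoc]
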